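/- Suppose K is a ×-deformation retract of L via inclusion i : K → L, and consider a pushout square in simplicial complexes with u : K → X along i, producing j : X → Y = L +_K X. Then j is the inclusion of a ×-deformation retract. -/

import Mathlib

/-- An (abstract) simplicial complex: a vertex type together with a collection of
finite subsets (faces) closed under taking subsets. -/
structure Cpx : Type 1 where
  V : Type
  faces : Set (Set V)
  finite_mem : ∀ σ ∈ faces, σ.Finite
  down : ∀ σ ∈ faces, ∀ τ ⊆ σ, τ ∈ faces

/-- A map of simplicial complexes: a vertex function sending faces to faces. -/
structure CpxHom (K L : Cpx) where
  f : K.V → L.V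
  map_face : ∀ σ ∈ K.faces, f '' σ ∈ L.faces

/-- Composition of maps of simplicial complexes. -/
def CpxHom.comp {K L M : Cpx} (g : CpxHom L M) (h : CpxHom K L) : CpxHom K M where
  f := g.f ∘ h.f
  map_face := fun σ hσ => by
    rw [Set.image_comp]
    exact g.map_face _ (h.map_face _ hσ)

/-- The path complex `I_n` on vertices `{0, …, n}` with edges `{i, i+1}`. -/
def pathCpx (n : ℕ) : Cpx where
  V := Fin (n + 1)
  faces := {σ | σ.Finite ∧ ∀ a ∈ σ, ∀ b ∈ σ, (a : ℕ) ≤ (b : ℕ) + 1}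
  finite_mem := fun _ hσ => hσ.1
  down := fun σ hσ τ hτ => ⟨hσ.1.subset hτ, fun a ha b hb => hσ.2 a (hτ ha) b (hτ hb)⟩

/-- The product of simplicial complexes: a finite set is a face iff both projections
are faces. -/
def prodCpx (K L : Cpx) : Cpx where
  V := K.V × L.V
  faces := {S | S.Finite ∧ Prod.fst '' S ∈ K.faces ∧ Prod.snd '' S ∈ L.faces}
  finite_mem := fun _ hS => hS.1
  down := fun S hS T hT =>
    ⟨hS.1.subset hT, K.down _ hS.2.1 _ (Set.image_mono hT),
      L.down _ hS.2.2 _ (Set.image_mono hT)⟩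

/-- `f` and `g` are `n`-homotopic: there is a map `H : K × I_n → L` with
`H(-,0) = f` and `H(-,n) = g`. -/
def NHomotopic {K L : Cpx} (n : ℕ) (f g : CpxHom K L) : Prop :=
  ∃ H : CpxHom (prodCpx K (pathCpx n)) L,
    (∀ x : K.V, H.f (x, (0 : Fin (n + 1))) = f.f x) ∧
    (∀ x : K.V, H.f (x, Fin.last n) = g.f x)

/-- `f` and `g` are `×`-homotopic: `n`-homotopic for some `n ≥ 1`. -/
def XHomotopic {K L : Cpx} (f g : CpxHom K L) : Prop :=
  ∃ n, 1 ≤ n ∧ NHomotopic n f g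
/-- `i : K → L` is the inclusion of a ×-deformation retract: there is a retraction
`r : L → K` with `r ∘ i = id` and an `n`-homotopy (`n ≥ 1`) `H : L × I_n → L` from
the identity to `i ∘ r`, constant on the image of `K`. -/
def IsXDefRetractIncl {K L : Cpx} (i : CpxHom K L) : Prop :=
  ∃ r : CpxHom L K, (∀ x : K.V, r.f (i.f x) = x) ∧
    ∃ n, 1 ≤ n ∧ ∃ H : CpxHom (prodCpx L (pathCpx n)) L,
      (∀ y : L.V, H.f (y, (0 : Fin (n + 1))) = y) ∧
      (∀ y : L.V, H.f (y, Fin.last n) = i.f (r.f y)) ∧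
      (∀ x : K.V, ∀ t : Fin (n + 1), H.f (i.f x, t) = i.f x)
/-- The commutative square with legs `i : K → L`, `u : K → X`, `v : L → Y`,
`j : X → Y` is a pushout square in the category of simplicial complexes. -/
def IsPushoutSq {K L X Y : Cpx} (i : CpxHom K L) (u : CpxHom K X)
    (v : CpxHom L Y) (j : CpxHom X Y) : Prop :=
  j.comp u = v.comp i ∧
  ∀ (Z : Cpx) (a : CpxHom L Z) (b : CpxHom X Z), a.comp i = b.comp u →
    ∃! c : CpxHom Y Z, c.comp v = a ∧ c.comp j = b

/-!
Since `r ∘ i = id`, the map `u ∘ r : L → X` agrees with `id : X → X` on `K`, so the pushout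
property yields a retraction `ρ : Y → X` of `j`. Likewise every stage `H(-, t)` of the homotopy
fixes `K`, hence `v ∘ H(-, t)` and `j` induce a map `G_t : Y → Y`. The maps `G_t` assemble into a
simplicial map `Y × I_n → Y` because every face of `Y` is the image of a face of `L` or of `X`,
and uniqueness in the pushout property identifies `G_0` with the identity and `G_n` with `j ∘ ρ`.
-/

@[ext]
lemma CpxHom.ext {K L : Cpx} {f g : CpxHom K L} (h : f.f = g.f) : f = g := by
  cases f; cases g; cases h; rfl

def CpxHom.id (K : Cpx) : CpxHom K K :=
  ⟨fun x => x, fun σ hσ => by rwa [Set.image_id']⟩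

lemma prodCpx_mem_faces_of_subset_prod {K L : Cpx} {S : Set (K.V × L.V)} {σ : Set K.V}
    {τ : Set L.V} (hσ : σ ∈ K.faces) (hτ : τ ∈ L.faces) (hS : S ⊆ σ ×ˢ τ) :
    S ∈ (prodCpx K L).faces :=
  ⟨((K.finite_mem σ hσ).prod (L.finite_mem τ hτ)).subset hS,
    K.down σ hσ _ (Set.image_subset_iff.2 fun _ hp => (hS hp).1),
    L.down τ hτ _ (Set.image_subset_iff.2 fun _ hp => (hS hp).2)⟩

lemma pathCpx_singleton_mem_faces {n : ℕ} (t : Fin (n + 1)) : {t} ∈ (pathCpx n).faces :=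
  ⟨Set.finite_singleton t, fun a ha b hb => by
    rw [Set.mem_singleton_iff.1 ha, Set.mem_singleton_iff.1 hb]; exact Nat.le_succ _⟩

/-- The stage `H(-, t)` of a homotopy `H : L × I_n → M`. -/
def CpxHom.slice {L M : Cpx} {n : ℕ} (H : CpxHom (prodCpx L (pathCpx n)) M)
    (t : Fin (n + 1)) : CpxHom L M where
  f l := H.f (l, t)
  map_face σ hσ := by
    have := H.map_face ((fun l => (l, t)) '' σ) <|
      prodCpx_mem_faces_of_subset_prod hσ (pathCpx_singleton_mem_faces t) <| by
        rintro _ ⟨l, hl, rfl⟩; exact ⟨hl, rfl⟩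
    rwa [← Set.image_comp H.f (fun l => (l, t)) σ] at this

lemma IsXDefRetractIncl.injective {K L : Cpx} {i : CpxHom K L} (hi : IsXDefRetractIncl i) :
    Function.Injective i.f := by
  obtain ⟨r, hr, -⟩ := hi
  exact Function.LeftInverse.injective hr

abbrev jointImageCpx {L X Y : Cpx} (v : CpxHom L Y) (j : CpxHom X Y) : Cpx where
  V := Y.V
  faces := {σ | (∃ τ ∈ L.faces, σ = v.f '' τ) ∨ ∃ τ ∈ X.faces, σ = j.f '' τ}
  finite_mem := by
    rintro _ (⟨τ, hτ, rfl⟩ | ⟨τ, hτ, rfl⟩)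
    · exact (L.finite_mem τ hτ).image _
    · exact (X.finite_mem τ hτ).image _
  down := by
    rintro _ (⟨τ, hτ, rfl⟩ | ⟨τ, hτ, rfl⟩) σ hσ <;>
      obtain ⟨ρ, hρ, rfl⟩ := Set.subset_image_iff.1 hσ
    · exact Or.inl ⟨ρ, L.down τ hτ ρ hρ, rfl⟩
    · exact Or.inr ⟨ρ, X.down τ hτ ρ hρ, rfl⟩

namespace IsPushoutSq

variable {K L X Y Z : Cpx} {i : CpxHom K L} {u : CpxHom K X} {v : CpxHom L Y}
  {j : CpxHom X Y} (hpo : IsPushoutSq i u v j)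
include hpo

lemma comm_apply (k : K.V) : j.f (u.f k) = v.f (i.f k) :=
  congrFun (congrArg CpxHom.f hpo.1) k

noncomputable def desc (a : CpxHom L Z) (b : CpxHom X Z) (h : a.comp i = b.comp u) :
    CpxHom Y Z :=
  (hpo.2 Z a b h).exists.choose

lemma desc_apply_left {a : CpxHom L Z} {b : CpxHom X Z} (h : a.comp i = b.comp u) (l : L.V) :
    (hpo.desc a b h).f (v.f l) = a.f l :=
  congrFun (congrArg CpxHom.f (hpo.2 Z a b h).exists.choose_spec.1) l

lemma desc_apply_right {a : CpxHom L Z} {b : CpxHom X Z} (h : a.comp i = b.comp u) (x : X.V) :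
    (hpo.desc a b h).f (j.f x) = b.f x :=
  congrFun (congrArg CpxHom.f (hpo.2 Z a b h).exists.choose_spec.2) x

lemma hom_ext {c c' : CpxHom Y Z} (hv : ∀ l, c.f (v.f l) = c'.f (v.f l))
    (hj : ∀ x, c.f (j.f x) = c'.f (j.f x)) : c = c' := by
  have hc : (c.comp v).comp i = (c.comp j).comp u := by
    ext k; exact congrArg c.f (hpo.comm_apply k).symm
  exact (hpo.2 Z _ _ hc).unique ⟨rfl, rfl⟩ ⟨(CpxHom.ext (funext hv)).symm,
    (CpxHom.ext (funext hj)).symm⟩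

lemma mem_faces {σ : Set Y.V} (hσ : σ ∈ Y.faces) :
    (∃ τ ∈ L.faces, σ = v.f '' τ) ∨ ∃ τ ∈ X.faces, σ = j.f '' τ := by
  let v' : CpxHom L (jointImageCpx v j) := ⟨v.f, fun τ hτ => Or.inl ⟨τ, hτ, rfl⟩⟩
  let j' : CpxHom X (jointImageCpx v j) := ⟨j.f, fun τ hτ => Or.inr ⟨τ, hτ, rfl⟩⟩
  let incl : CpxHom (jointImageCpx v j) Y := ⟨fun y => y, by
    rintro _ (⟨τ, hτ, rfl⟩ | ⟨τ, hτ, rfl⟩) <;> rw [Set.image_id']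
    exacts [v.map_face τ hτ, j.map_face τ hτ]⟩
  have hc : v'.comp i = j'.comp u := by ext k; exact (hpo.comm_apply k).symm
  -- `incl ∘ c = id` forces `c` to be the identity on vertices, so `σ = c '' σ`.
  let c := hpo.desc v' j' hc
  have hinc : incl.comp c = CpxHom.id Y :=
    hpo.hom_ext (hpo.desc_apply_left hc) (hpo.desc_apply_right hc)
  have hcσ := c.map_face σ hσ
  rwa [show c.f = fun y => y from congrArg CpxHom.f hinc, Set.image_id'] at hcσ

lemma image_mem_faces {M : Cpx} (H : CpxHom (prodCpx L M) L) {F : Y.V × M.V → Y.V}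
    (hFv : ∀ l t, F (v.f l, t) = v.f (H.f (l, t))) (hFj : ∀ x t, F (j.f x, t) = j.f x)
    {S : Set (Y.V × M.V)} (hS : S ∈ (prodCpx Y M).faces) : F '' S ∈ Y.faces := by
  obtain ⟨-, hfst, hsnd⟩ := hS
  rcases hpo.mem_faces hfst with ⟨σ, hσ, hσS⟩ | ⟨σ, hσ, hσS⟩
  · let T : Set (L.V × M.V) := {p | p.1 ∈ σ ∧ (v.f p.1, p.2) ∈ S}
    have hT : T ∈ (prodCpx L M).faces :=
      prodCpx_mem_faces_of_subset_prod hσ hsnd fun p hp => ⟨hp.1, _, hp.2, rfl⟩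
    refine Y.down _ (v.map_face _ (H.map_face T hT)) _ ?_
    rintro _ ⟨⟨y, t⟩, hyt, rfl⟩
    obtain ⟨l, hl, rfl⟩ : y ∈ v.f '' σ := hσS ▸ ⟨_, hyt, rfl⟩
    exact ⟨H.f (l, t), ⟨(l, t), ⟨hl, hyt⟩, rfl⟩, (hFv l t).symm⟩
  · refine Y.down _ hfst _ ?_
    rintro _ ⟨⟨y, t⟩, hyt, rfl⟩
    obtain ⟨x, -, rfl⟩ : y ∈ j.f '' σ := hσS ▸ ⟨_, hyt, rfl⟩
    exact ⟨_, hyt, (hFj x t).symm⟩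

lemma exists_homotopy_extension {n : ℕ} (H : CpxHom (prodCpx L (pathCpx n)) L)
    (hH : ∀ k t, H.f (i.f k, t) = i.f k) :
    ∃ G : CpxHom (prodCpx Y (pathCpx n)) Y,
      (∀ l t, G.f (v.f l, t) = v.f (H.f (l, t))) ∧ ∀ x t, G.f (j.f x, t) = j.f x := by
  have hstage : ∀ t, (v.comp (H.slice t)).comp i = j.comp u := fun t => by
    ext k; exact (congrArg v.f (hH k t)).trans (hpo.comm_apply k).symm
  let G t := hpo.desc _ _ (hstage t)
  have hGv l (t : (pathCpx n).V) : (G t).f (v.f l) = v.f (H.f (l, t)) := hpo.desc_apply_left _ l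
  have hGj x (t : (pathCpx n).V) : (G t).f (j.f x) = j.f x := hpo.desc_apply_right _ x
  exact ⟨⟨fun p => (G p.2).f p.1, fun S hS => hpo.image_mem_faces H hGv hGj hS⟩, hGv, hGj⟩

noncomputable def retraction (r : CpxHom L K) (hr : ∀ k, r.f (i.f k) = k) : CpxHom Y X :=
  hpo.desc (u.comp r) (CpxHom.id X) (by ext k; exact congrArg u.f (hr k))

lemma retraction_apply_left {r : CpxHom L K} (hr : ∀ k, r.f (i.f k) = k) (l : L.V) :
    (hpo.retraction r hr).f (v.f l) = u.f (r.f l) :=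
  hpo.desc_apply_left _ l

lemma retraction_apply_right {r : CpxHom L K} (hr : ∀ k, r.f (i.f k) = k) (x : X.V) :
    (hpo.retraction r hr).f (j.f x) = x :=
  hpo.desc_apply_right _ x

lemma isXDefRetractIncl (hi : IsXDefRetractIncl i) : IsXDefRetractIncl j := by
  obtain ⟨r, hr, n, hn, H, hH0, hHn, hHc⟩ := hi
  obtain ⟨G, hGv, hGj⟩ := hpo.exists_homotopy_extension H hHc
  let ρ := hpo.retraction r hr
  have hG0 : G.slice 0 = CpxHom.id Y :=
    hpo.hom_ext (fun l => (hGv l (0 : Fin (n + 1))).trans (congrArg v.f (hH0 l)))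
      (fun x => hGj x (0 : Fin (n + 1)))
  have hGn : G.slice (Fin.last n) = j.comp ρ := by
    refine hpo.hom_ext (fun l => ?_) (fun x => ?_)
    · calc G.f (v.f l, Fin.last n) = v.f (i.f (r.f l)) := (hGv l _).trans (congrArg v.f (hHn l))
        _ = j.f (ρ.f (v.f l)) := by rw [hpo.retraction_apply_left, hpo.comm_apply]
    · exact (hGj x _).trans (congrArg j.f (hpo.retraction_apply_right hr x)).symm
  exact ⟨ρ, hpo.retraction_apply_right hr, n, hn, G, fun y => congrArg (fun c => c.f y) hG0,
    fun y => congrArg (fun c => c.f y) hGn, hGj⟩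

end IsPushoutSq

theorem pushout_xDefRetract_general {K L X Y : Cpx} (i : CpxHom K L) (u : CpxHom K X)
    (v : CpxHom L Y) (j : CpxHom X Y)
    (hi : IsXDefRetractIncl i) (hpo : IsPushoutSq i u v j) :
    Function.Injective j.f ∧ IsXDefRetractIncl j :=
  have hj := hpo.isXDefRetractIncl hi
  ⟨hj.injective, hj⟩

/-- The pushout of the inclusion of a ×-deformation retract `i : K → L` along
`u : K → X` is again the inclusion of a ×-deformation retract `j : X → Y`. -/
theorem pushout_xDefRetract {K L X Y : Cpx} (i : CpxHom K L) (u : CpxHom K X)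
    (v : CpxHom L Y) (j : CpxHom X Y) (hmono : Function.Injective i.f)
    (hi : IsXDefRetractIncl i) (hpo : IsPushoutSq i u v j) :
    Function.Injective j.f ∧ IsXDefRetractIncl j :=
  pushout_xDefRetract_general i u v j hi hpo
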